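/- Let G be a finite simple graph whose vertex set is partitioned into w classes (types) such that any two vertices in the same class have the same neighborhood type, and let the threshold function f be constant on each class. If S is a target set of G, then the activation process arising from S activates all of G within at most w rounds, i.e., S_w = V(G). (Equivalently, in each round before termination at least one whole type becomes activated.) -/
import Mathlib


open Finset

variable {V : Type*} [Fintype V] [DecidableEq V]

/-- One round of the activation process: a vertex becomes active if the number of its
already active neighbors is at least its threshold. -/
def actStep (G : SimpleGraph V) [DecidableRel G.Adj] (f : V → ℕ) (S : Finset V) : Finset V :=
  S ∪ Finset.univ.filter fun v => f v ≤ (G.neighborFinset v ∩ S).card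

/-- The activation process arising from `S`: `S_0 = S` and
`S_{i+1} = S_i ∪ {v : |N(v) ∩ S_i| ≥ f v}`. -/
def actProcess (G : SimpleGraph V) [DecidableRel G.Adj] (f : V → ℕ) (S : Finset V) : ℕ → Finset V
  | 0 => S
  | i + 1 => actStep G f (actProcess G f S i)

/-- `S` is a target set if the activation process arising from `S` eventually
activates the whole graph. -/
def IsTargetSet (G : SimpleGraph V) [DecidableRel G.Adj] (f : V → ℕ) (S : Finset V) : Prop :=
  ∃ i, actProcess G f S i = Finset.univ

/-- Two (distinct) vertices have the same neighborhood type if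
`N(u) \ {v} = N(v) \ {u}`. -/
def SameNType (G : SimpleGraph V) (u v : V) : Prop :=
  G.neighborSet u \ {v} = G.neighborSet v \ {u}

lemma subset_actStep (G : SimpleGraph V) [DecidableRel G.Adj] (f : V → ℕ) (S : Finset V) :
    S ⊆ actStep G f S := Finset.subset_union_left

lemma actProcess_mono (G : SimpleGraph V) [DecidableRel G.Adj] (f : V → ℕ) (S : Finset V)
    {i j : ℕ} (h : i ≤ j) : actProcess G f S i ⊆ actProcess G f S j := by
  induction j with
  | zero => simp_all
  | succ j ih =>
    rcases eq_or_lt_of_le h with h' | h'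
    · subst h'; rfl
    · exact (ih (Nat.lt_succ_iff.mp h')).trans (subset_actStep ..)

lemma actProcess_fixed (G : SimpleGraph V) [DecidableRel G.Adj] (f : V → ℕ) (S : Finset V)
    {i : ℕ} (h : actProcess G f S (i+1) = actProcess G f S i) {j : ℕ} (hij : i ≤ j) :
    actProcess G f S j = actProcess G f S i := by
  induction j with
  | zero => have : i = 0 := Nat.le_zero.mp hij; rw [this]
  | succ j ih =>
    rcases eq_or_lt_of_le hij with h' | h'
    · subst h'; rfl
    · have hji : i ≤ j := Nat.lt_succ_iff.mp h'
      have hj := ih hji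
      show actStep G f (actProcess G f S j) = _
      rw [hj]
      exact h

lemma card_nbr_le (G : SimpleGraph V) [DecidableRel G.Adj] {u v : V}
    (hty : SameNType G u v) (S : Finset V) (hu : u ∉ S) :
    (G.neighborFinset v ∩ S).card ≤ (G.neighborFinset u ∩ S).card := by
  apply Finset.card_le_card
  intro x hx
  rw [Finset.mem_inter, SimpleGraph.mem_neighborFinset] at hx ⊢
  refine ⟨?_, hx.2⟩
  have hxu : x ≠ u := fun h => hu (h ▸ hx.2)
  have : x ∈ G.neighborSet v \ {u} := ⟨hx.1, hxu⟩
  rw [← hty] at this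
  exact this.1

lemma filter_types_mono (G : SimpleGraph V) (w : ℕ) (P : Fin w → Finset V)
    {S T : Finset V} (h : S ⊆ T) :
    (Finset.univ.filter fun j => P j ⊆ S) ⊆ (Finset.univ.filter fun j => P j ⊆ T) := by
  intro j hj
  rw [Finset.mem_filter] at hj ⊢
  exact ⟨hj.1, hj.2.trans h⟩

/-- If the vertex set of `G` is partitioned into `w` types (classes of vertices of
pairwise the same neighborhood type) and the threshold function is constant on each
type, then the activation process of any target set activates the whole graph within
at most `w` rounds. -/
theorem targetSet_activates_within_nd_rounds (G : SimpleGraph V) [DecidableRel G.Adj]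
    (f : V → ℕ) (w : ℕ) (P : Fin w → Finset V)
    (hdisj : ∀ i j, i ≠ j → Disjoint (P i) (P j))
    (hcover : Finset.univ.biUnion P = Finset.univ)
    (htype : ∀ i, ∀ u ∈ P i, ∀ v ∈ P i, u ≠ v → SameNType G u v)
    (hf : ∀ i, ∀ u ∈ P i, ∀ v ∈ P i, f u = f v)
    (S : Finset V) (hS : IsTargetSet G f S) :
    actProcess G f S w = Finset.univ := by
  by_cases hex : ∃ i < w, actProcess G f S (i+1) = actProcess G f S i
  · obtain ⟨i, hiw, heq⟩ := hex
    obtain ⟨k, hk⟩ := hS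
    have hiuniv : actProcess G f S i = Finset.univ := by
      rcases le_total k i with h | h
      · have := actProcess_mono G f S h
        rw [hk] at this
        exact Finset.univ_subset_iff.mp this
      · rw [← actProcess_fixed G f S heq h, hk]
    rw [actProcess_fixed G f S heq (le_of_lt hiw), hiuniv]
  · push_neg at hex
    have key : ∀ i ≤ w, i ≤ ((Finset.univ.filter fun j => P j ⊆ actProcess G f S i)).card := by
      intro i
      induction i with
      | zero => intro _; exact Nat.zero_le _
      | succ i ih =>
        intro hiw
        have hi : i < w := Nat.lt_of_succ_le hiw
        have hsub : actProcess G f S i ⊆ actProcess G f S (i+1) := subset_actStep ..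
        have hss : actProcess G f S i ⊂ actProcess G f S (i+1) :=
          lt_of_le_of_ne hsub (Ne.symm (hex i hi))
        obtain ⟨v, hv1, hv2⟩ := Finset.exists_of_ssubset hss
        have hact : f v ≤ (G.neighborFinset v ∩ actProcess G f S i).card := by
          have : v ∈ actStep G f (actProcess G f S i) := hv1
          rcases Finset.mem_union.mp this with h | h
          · exact absurd h hv2
          · exact (Finset.mem_filter.mp h).2
        have hvmem : v ∈ Finset.univ.biUnion P := by rw [hcover]; exact Finset.mem_univ v
        obtain ⟨j, -, hvj⟩ := Finset.mem_biUnion.mp hvmem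
        have hPj : P j ⊆ actProcess G f S (i+1) := by
          intro u hu
          by_cases huv : u = v
          · subst huv; exact hv1
          · by_cases hus : u ∈ actProcess G f S i
            · exact hsub hus
            · refine Finset.mem_union_right _ (Finset.mem_filter.mpr ⟨Finset.mem_univ u, ?_⟩)
              calc f u = f v := hf j u hu v hvj
                _ ≤ (G.neighborFinset v ∩ actProcess G f S i).card := hact
                _ ≤ (G.neighborFinset u ∩ actProcess G f S i).card :=
                    card_nbr_le G (htype j u hu v hvj huv) _ hus
        have hjnot : j ∉ Finset.univ.filter fun j => P j ⊆ actProcess G f S i := by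
          intro hmem
          exact hv2 ((Finset.mem_filter.mp hmem).2 hvj)
        have hins : insert j (Finset.univ.filter fun j => P j ⊆ actProcess G f S i) ⊆
            Finset.univ.filter fun j => P j ⊆ actProcess G f S (i+1) := by
          intro x hx
          rcases Finset.mem_insert.mp hx with h | h
          · exact Finset.mem_filter.mpr ⟨Finset.mem_univ x, h ▸ hPj⟩
          · exact filter_types_mono G w P hsub h
        calc i + 1 ≤ (Finset.univ.filter fun j => P j ⊆ actProcess G f S i).card + 1 :=
              Nat.succ_le_succ (ih (le_of_lt hi))
          _ = (insert j (Finset.univ.filter fun j => P j ⊆ actProcess G f S i)).card :=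
              (Finset.card_insert_of_notMem hjnot).symm
          _ ≤ _ := Finset.card_le_card hins
    have hw := key w le_rfl
    have hall : (Finset.univ.filter fun j => P j ⊆ actProcess G f S w) = Finset.univ := by
      apply Finset.eq_univ_of_card
      have hle := Finset.card_le_univ (Finset.univ.filter fun j => P j ⊆ actProcess G f S w)
      simp only [Finset.card_univ, Fintype.card_fin] at hle ⊢
      omega
    apply Finset.univ_subset_iff.mp
    rw [← hcover]
    apply Finset.biUnion_subset.mpr
    intro j _
    have : j ∈ Finset.univ.filter fun j => P j ⊆ actProcess G f S w := by
      rw [hall]; exact Finset.mem_univ j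
    exact (Finset.mem_filter.mp this).2
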